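/- arXiv:1108.6020 — 4 statements merged into one kernel-verified Lean document; each statement's English description precedes it below -/
import Mathlib

section
/- Let (M, K) be a Grothendieck–Verdier category. A natural isomorphism f : Id_M ≅ D² corresponds (under the bijection between natural isomorphisms Id ≅ D² and natural families Hom(X⊗Y,K) ≅ Hom(Y⊗X,K)) to a pivotal structure if and only if: (i) f is monoidal with respect to the canonical monoidal structure on D², and (ii) f_K : K ≅ D²K equals the canonical isomorphism K ≅ D²K. In this case f_{DX} = D(f_X)⁻¹ for all X ∈ M. -/
open CategoryTheory Opposite MonoidalCategory

universe v u

/-- A Grothendieck–Verdier category structure on a monoidal category `M`: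
a dualizing object `K`, the duality anti-equivalence `D`, and the natural
family of bijections `Hom(X ⊗ Y, K) ≃ Hom(X, D Y)`. -/
structure GVCat (M : Type u) [Category.{v} M] [MonoidalCategory M] where
  K : M
  D : Mᵒᵖ ≌ M
  homEquiv : ∀ X Y : M, (X ⊗ Y ⟶ K) ≃ (X ⟶ D.functor.obj (op Y))
  homEquiv_natX : ∀ {X X' : M} (Y : M) (f : X' ⟶ X) (h : X ⊗ Y ⟶ K),
    homEquiv X' Y (f ▷ Y ≫ h) = f ≫ homEquiv X Y h
  homEquiv_natY : ∀ (X : M) {Y Y' : M} (g : Y' ⟶ Y) (h : X ⊗ Y ⟶ K),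
    homEquiv X Y' (X ◁ g ≫ h) = homEquiv X Y h ≫ D.functor.map g.op

namespace GVCat

variable {M : Type u} [Category.{v} M] [MonoidalCategory M] (G : GVCat M)

/-- The duality functor on objects: `D Y`. -/
abbrev d (Y : M) : M := G.D.functor.obj (op Y)

/-- The inverse duality functor on objects: `D⁻¹ X`. -/
abbrev dinv (X : M) : M := (G.D.inverse.obj X).unop

/-- The duality functor on morphisms. -/
abbrev dmap {A B : M} (f : A ⟶ B) : G.d B ⟶ G.d A := G.D.functor.map f.op

/-- The inverse duality functor on morphisms. -/
abbrev dinvmap {A B : M} (f : A ⟶ B) : G.dinv B ⟶ G.dinv A := (G.D.inverse.map f).unop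

/-- `D² Y`. -/
abbrev dd (Y : M) : M := G.d (G.d Y)

/-- `D²` as a covariant endofunctor of `M`. -/
def ddF : M ⥤ M := G.D.functor.rightOp ⋙ G.D.functor

/-- The second defining natural bijection `Hom(X ⊗ Y, K) ≃ Hom(Y, D⁻¹ X)`. -/
def homEquiv' (X Y : M) : (X ⊗ Y ⟶ G.K) ≃ (Y ⟶ G.dinv X) :=
  (G.homEquiv X Y).trans
    ((G.D.symm.toAdjunction.homEquiv X (op Y)).symm.trans (opEquiv _ _))

/-- The canonical isomorphism `D⁻¹ (D X) ≅ X`. -/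
def dinvD (X : M) : G.dinv (G.d X) ≅ X := (G.D.unitIso.app (op X)).unop

/-- The canonical isomorphism `D (D⁻¹ X) ≅ X`. -/
def dDinv (X : M) : G.d (G.dinv X) ≅ X := G.D.counitIso.app X

/-- The canonical natural bijection `g : Hom(X ⊗ Y, K) ≃ Hom(D²Y ⊗ X, K)`. -/
def g (X Y : M) : (X ⊗ Y ⟶ G.K) ≃ (G.dd Y ⊗ X ⟶ G.K) :=
  ((G.homEquiv X Y).trans ((Iso.refl X).homCongr (G.dinvD (G.d Y)).symm)).trans
    (G.homEquiv' (G.dd Y) X).symm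

end GVCat

namespace GVCat

variable {M : Type u} [Category.{v} M] [MonoidalCategory M] (G : GVCat M)

/-- The composite bijection
`Hom(D²(Y₁⊗Y₂) ⊗ X, K) ≃ Hom((D²Y₁ ⊗ D²Y₂) ⊗ X, K)` obtained from `g⁻¹` followed by two
applications of `g` (with the associativity constraints inserted). -/
def gchain (Y₁ Y₂ X : M) :
    (G.dd (Y₁ ⊗ Y₂) ⊗ X ⟶ G.K) ≃ ((G.dd Y₁ ⊗ G.dd Y₂) ⊗ X ⟶ G.K) :=
  (G.g X (Y₁ ⊗ Y₂)).symm.trans <|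
    ((α_ X Y₁ Y₂).symm.homCongr (Iso.refl G.K)).trans <|
      (G.g (X ⊗ Y₁) Y₂).trans <|
        ((α_ (G.dd Y₂) X Y₁).symm.homCongr (Iso.refl G.K)).trans <|
          (G.g (G.dd Y₂ ⊗ X) Y₁).trans
            ((α_ (G.dd Y₁) (G.dd Y₂) X).symm.homCongr (Iso.refl G.K))

/-- The characterizing property of the canonical monoidal structure
`u : D²(Y₁ ⊗ Y₂) ≅ D²Y₁ ⊗ D²Y₂` on `D²`. -/
def UChar (u : ∀ Y₁ Y₂ : M, G.dd (Y₁ ⊗ Y₂) ≅ G.dd Y₁ ⊗ G.dd Y₂) : Prop :=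
  ∀ (Y₁ Y₂ X : M) (h : G.dd (Y₁ ⊗ Y₂) ⊗ X ⟶ G.K),
    ((u Y₁ Y₂).inv ▷ X) ≫ h = G.gchain Y₁ Y₂ X h

/-- The morphism `D²K ⟶ K` which is the image of `id K` under
`Hom(𝟙 ⊗ K, K) ≅ Hom(D²K ⊗ 𝟙, K)`; it is inverse to the canonical isomorphism
`K ≅ D²K`. -/
def mK : G.dd G.K ⟶ G.K := (ρ_ (G.dd G.K)).inv ≫ G.g (𝟙_ M) G.K (λ_ G.K).hom

/-- `cK : K ⟶ D²K` is the canonical isomorphism `K ≅ D²K`. -/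
def CKChar (cK : G.K ⟶ G.dd G.K) : Prop :=
  cK ≫ G.mK = 𝟙 G.K ∧ G.mK ≫ cK = 𝟙 (G.dd G.K)

/-- The family `ψ` corresponding to a natural isomorphism `f : Id ≅ D²`. -/
def psiOf (f : 𝟭 M ≅ G.ddF) (X Y : M) (h : X ⊗ Y ⟶ G.K) : Y ⊗ X ⟶ G.K :=
  (f.hom.app Y ▷ X) ≫ G.g X Y h

/-- The cyclic identity `ψ_{X⊗Y,Z} ∘ ψ_{Y⊗Z,X} ∘ ψ_{Z⊗X,Y} = id` (with the associativity
constraints inserted). -/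
def Pretty2 (ψ : ∀ X Y : M, (X ⊗ Y ⟶ G.K) → (Y ⊗ X ⟶ G.K)) : Prop :=
  ∀ (X Y Z : M) (h : (Z ⊗ X) ⊗ Y ⟶ G.K),
    (α_ Z X Y).hom ≫
        ψ (X ⊗ Y) Z ((α_ X Y Z).hom ≫
          ψ (Y ⊗ Z) X ((α_ Y Z X).hom ≫ ψ (Z ⊗ X) Y h)) = h

/-- The involutivity identity `ψ_{X,Y} ∘ ψ_{Y,X} = id`. -/
def Pretty1 (ψ : ∀ X Y : M, (X ⊗ Y ⟶ G.K) → (Y ⊗ X ⟶ G.K)) : Prop :=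
  ∀ (X Y : M) (h : X ⊗ Y ⟶ G.K), ψ Y X (ψ X Y h) = h

end GVCat

namespace GVCat

variable {M : Type u} [Category.{v} M] [MonoidalCategory M] (G : GVCat M)

lemma dmap_id' (A : M) : G.dmap (𝟙 A) = 𝟙 (G.d A) := by
  simp [dmap]

lemma dmap_comp' {A B C : M} (a : A ⟶ B) (b : B ⟶ C) :
    G.dmap (a ≫ b) = G.dmap b ≫ G.dmap a := by
  simp [dmap, op_comp]

lemma dmap_inj {A B : M} {a b : A ⟶ B} (h : G.dmap a = G.dmap b) : a = b :=
  Quiver.Hom.op_inj (G.D.functor.map_injective h)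

lemma ddF_map' {A B : M} (a : A ⟶ B) : G.ddF.map a = G.dmap (G.dmap a) := rfl

lemma homEquiv_homEquiv'_symm {W X : M} (b : X ⟶ G.dinv W) :
    G.homEquiv W X ((G.homEquiv' W X).symm b)
      = G.D.counitInv.app W ≫ G.D.functor.map b.op := by
  rw [homEquiv', Equiv.symm_trans_apply, Equiv.apply_symm_apply, Equiv.symm_trans_apply,
    Equiv.symm_symm]
  rfl

lemma homEquiv_g {X Y : M} (h : X ⊗ Y ⟶ G.K) :
    G.homEquiv (G.dd Y) X (G.g X Y h) = G.dmap (G.homEquiv X Y h) := by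
  show G.homEquiv (G.dd Y) X ((G.homEquiv' (G.dd Y) X).symm
      ((Iso.refl X).homCongr (G.dinvD (G.d Y)).symm (G.homEquiv X Y h))) = _
  rw [homEquiv_homEquiv'_symm]
  simp only [Iso.homCongr_apply, Iso.refl_inv, Iso.symm_hom, Category.id_comp, op_comp,
    Functor.map_comp, dinvD]
  rw [show (G.D.unitIso.app (Opposite.op (G.d Y))).unop.inv.op
      = G.D.unitInv.app (Opposite.op (G.d Y)) by
    simp [Iso.unop, Iso.app_inv]]
  rw [Equivalence.counitInv_functor_comp_assoc]



/-- naturality of `g` in the first slot. -/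
lemma g_whiskerRight {X' X Y : M} (φ : X' ⟶ X) (h : X ⊗ Y ⟶ G.K) :
    G.g X' Y (φ ▷ Y ≫ h) = (G.dd Y ◁ φ) ≫ G.g X Y h := by
  apply (G.homEquiv (G.dd Y) X').injective
  rw [homEquiv_g, G.homEquiv_natX, G.homEquiv_natY, homEquiv_g, dmap_comp']

/-- `L`-characterization of `ψ`. -/
lemma homEquiv_psiOf (f : 𝟭 M ≅ G.ddF) {X Y : M} (h : X ⊗ Y ⟶ G.K) :
    G.homEquiv Y X (G.psiOf f X Y h) = f.hom.app Y ≫ G.dmap (G.homEquiv X Y h) := by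
  rw [psiOf]; refine (G.homEquiv_natX X (f.hom.app Y) (G.g X Y h)).trans ?_
  exact congrArg (f.hom.app Y ≫ ·) (G.homEquiv_g h)

lemma mK_rho : (ρ_ (G.dd G.K)).hom ≫ G.mK = G.g (𝟙_ M) G.K (λ_ G.K).hom := by
  rw [mK, Iso.hom_inv_id_assoc]

lemma mK_r :
    G.mK ≫ G.homEquiv G.K (𝟙_ M) (ρ_ G.K).hom
      = G.dmap (G.homEquiv (𝟙_ M) G.K (λ_ G.K).hom) := by
  have h1 := G.homEquiv_g (λ_ G.K).hom
  rw [← mK_rho] at h1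
  rw [← h1]
  have h2 : (ρ_ (G.dd G.K)).hom ≫ G.mK = (G.mK ▷ 𝟙_ M) ≫ (ρ_ G.K).hom := by
    rw [rightUnitor_naturality]
  rw [h2, G.homEquiv_natX]

lemma g_unit {W : M} (k : W ⟶ G.K) :
    G.g (𝟙_ M) W ((λ_ W).hom ≫ k)
      = (ρ_ (G.dd W)).hom ≫ G.ddF.map k ≫ G.mK := by
  apply (G.homEquiv (G.dd W) (𝟙_ M)).injective
  rw [homEquiv_g]
  have e1 : (λ_ W).hom ≫ k = (𝟙_ M ◁ k) ≫ (λ_ G.K).hom := by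
    rw [leftUnitor_naturality]
  rw [e1, G.homEquiv_natY]
  have e2 : (ρ_ (G.dd W)).hom ≫ G.ddF.map k ≫ G.mK
      = ((G.ddF.map k ≫ G.mK) ▷ 𝟙_ M) ≫ (ρ_ G.K).hom := by
    rw [rightUnitor_naturality]; rfl
  erw [e2, G.homEquiv_natX, Category.assoc, mK_r, dmap_comp', ddF_map']
  rfl

/-- The fundamental identity: `g ∘ g` is `D²` followed by `u⁻¹` and `mK`. -/
lemma g_g (u : ∀ Y₁ Y₂ : M, G.dd (Y₁ ⊗ Y₂) ≅ G.dd Y₁ ⊗ G.dd Y₂) (hu : G.UChar u)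
    {X Y : M} (k : X ⊗ Y ⟶ G.K) :
    G.g (G.dd Y) X (G.g X Y k) = (u X Y).inv ≫ G.ddF.map k ≫ G.mK := by
  have H := hu X Y (𝟙_ M) ((ρ_ (G.dd (X ⊗ Y))).hom ≫ G.ddF.map k ≫ G.mK)
  -- compute the `gchain` side
  have e0 : (G.g (𝟙_ M) (X ⊗ Y)).symm
      ((ρ_ (G.dd (X ⊗ Y))).hom ≫ G.ddF.map k ≫ G.mK) = (λ_ (X ⊗ Y)).hom ≫ k := by
    rw [← g_unit, Equiv.symm_apply_apply]
  rw [gchain, Equiv.trans_apply, Equiv.trans_apply, Equiv.trans_apply, Equiv.trans_apply,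
    Equiv.trans_apply, e0] at H
  simp only [Iso.homCongr_apply, Iso.refl_hom, Iso.symm_inv, Category.comp_id] at H
  rw [show (α_ (𝟙_ M) X Y).hom ≫ (λ_ (X ⊗ Y)).hom ≫ k = ((λ_ X).hom ▷ Y) ≫ k by
      rw [leftUnitor_tensor_hom, Category.assoc, Iso.hom_inv_id_assoc]] at H
  rw [g_whiskerRight] at H
  rw [show (α_ (G.dd Y) (𝟙_ M) X).hom ≫ (G.dd Y ◁ (λ_ X).hom) ≫ G.g X Y k
      = ((ρ_ (G.dd Y)).hom ▷ X) ≫ G.g X Y k by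
      rw [← Category.assoc, MonoidalCategory.triangle]] at H
  rw [g_whiskerRight] at H
  rw [show (α_ (G.dd X) (G.dd Y) (𝟙_ M)).hom ≫ (G.dd X ◁ (ρ_ (G.dd Y)).hom) ≫
        G.g (G.dd Y) X (G.g X Y k)
      = (ρ_ (G.dd X ⊗ G.dd Y)).hom ≫ G.g (G.dd Y) X (G.g X Y k) by
      rw [← Category.assoc, ← rightUnitor_tensor_hom]] at H
  rw [show ((u X Y).inv ▷ 𝟙_ M) ≫ (ρ_ (G.dd (X ⊗ Y))).hom ≫ G.ddF.map k ≫ G.mK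
      = (ρ_ (G.dd X ⊗ G.dd Y)).hom ≫ (u X Y).inv ≫ G.ddF.map k ≫ G.mK by
      rw [← Category.assoc, rightUnitor_naturality, Category.assoc]] at H
  exact ((cancel_epi (ρ_ (G.dd X ⊗ G.dd Y)).hom).mp H).symm


/-- The triple-`ψ` composite computed in closed form (generalized form). -/
lemma core' (u : ∀ Y₁ Y₂ : M, G.dd (Y₁ ⊗ Y₂) ≅ G.dd Y₁ ⊗ G.dd Y₂)
    (hu : G.UChar u) {X Y Z : M} (φX : X ⟶ G.dd X) (φY : Y ⟶ G.dd Y) (φZ : Z ⟶ G.dd Z)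
    (k : Z ⊗ (X ⊗ Y) ⟶ G.K) :
    (φZ ▷ (X ⊗ Y)) ≫ G.g (X ⊗ Y) Z ((α_ X Y Z).hom ≫
        (φX ▷ (Y ⊗ Z)) ≫ G.g (Y ⊗ Z) X ((α_ Y Z X).hom ≫
          (φY ▷ (Z ⊗ X)) ≫ G.g (Z ⊗ X) Y ((α_ Z X Y).hom ≫ k)))
      = (φZ ▷ (X ⊗ Y)) ≫ (G.dd Z ◁ ((φX ⊗ₘ φY) ≫ (u X Y).inv)) ≫
          G.g (G.dd (X ⊗ Y)) Z (G.g Z (X ⊗ Y) k) := by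
  set a := G.g (Z ⊗ X) Y ((α_ Z X Y).hom ≫ k) with ha
  rw [show (α_ Y Z X).hom ≫ (φY ▷ (Z ⊗ X)) ≫ a
      = ((φY ▷ Z) ▷ X) ≫ ((α_ (G.dd Y) Z X).hom ≫ a) by
    rw [← Category.assoc, ← associator_naturality_left, Category.assoc]]
  rw [g_whiskerRight]
  set b := G.g (G.dd Y ⊗ Z) X ((α_ (G.dd Y) Z X).hom ≫ a) with hb
  rw [show (α_ X Y Z).hom ≫ (φX ▷ (Y ⊗ Z)) ≫ (G.dd X ◁ (φY ▷ Z)) ≫ b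
      = ((φX ⊗ₘ φY) ▷ Z) ≫ ((α_ (G.dd X) (G.dd Y) Z).hom ≫ b) by
    rw [← Category.assoc, ← associator_naturality_left, Category.assoc,
      ← Category.assoc (f := (α_ (G.dd X) Y Z).hom), ← associator_naturality_middle]
    simp only [MonoidalCategory.tensorHom_def, comp_whiskerRight, Category.assoc]]
  rw [g_whiskerRight]
  have s4 : (α_ (G.dd X) (G.dd Y) Z).hom ≫ b = ((u X Y).inv ▷ Z) ≫ G.g Z (X ⊗ Y) k := by
    rw [hu X Y Z (G.g Z (X ⊗ Y) k), gchain, Equiv.trans_apply, Equiv.trans_apply,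
      Equiv.trans_apply, Equiv.trans_apply, Equiv.trans_apply, Equiv.symm_apply_apply]
    simp only [Iso.homCongr_apply, Iso.refl_hom, Iso.symm_inv, Category.comp_id, hb, ha]
  rw [s4, g_whiskerRight, ← MonoidalCategory.whiskerLeft_comp_assoc]

/-- The triple-`ψ` composite computed in closed form. -/
lemma core (f : 𝟭 M ≅ G.ddF) (u : ∀ Y₁ Y₂ : M, G.dd (Y₁ ⊗ Y₂) ≅ G.dd Y₁ ⊗ G.dd Y₂)
    (hu : G.UChar u) {X Y Z : M} (k : Z ⊗ (X ⊗ Y) ⟶ G.K) :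
    G.psiOf f (X ⊗ Y) Z ((α_ X Y Z).hom ≫
        G.psiOf f (Y ⊗ Z) X ((α_ Y Z X).hom ≫ G.psiOf f (Z ⊗ X) Y ((α_ Z X Y).hom ≫ k)))
      = (f.hom.app Z ▷ (X ⊗ Y)) ≫
          (G.dd Z ◁ ((f.hom.app X ⊗ₘ f.hom.app Y) ≫ (u X Y).inv)) ≫
          G.g (G.dd (X ⊗ Y)) Z (G.g Z (X ⊗ Y) k) :=
  G.core' u hu (f.hom.app X) (f.hom.app Y) (f.hom.app Z) k


/-- `ψ∘ψ` in closed form (generalized). -/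
lemma psi_psi' (u : ∀ Y₁ Y₂ : M, G.dd (Y₁ ⊗ Y₂) ≅ G.dd Y₁ ⊗ G.dd Y₂) (hu : G.UChar u)
    {X Y : M} (φX : X ⟶ G.dd X) (φY : Y ⟶ G.dd Y) (h : X ⊗ Y ⟶ G.K) :
    (φX ▷ Y) ≫ G.g Y X ((φY ▷ X) ≫ G.g X Y h)
      = (φX ⊗ₘ φY) ≫ (u X Y).inv ≫ G.ddF.map h ≫ G.mK := by
  rw [g_whiskerRight, g_g G u hu h, MonoidalCategory.tensorHom_def]
  simp only [Category.assoc]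

/-- `ψ∘ψ` in closed form. -/
lemma psi_psi (f : 𝟭 M ≅ G.ddF) (u : ∀ Y₁ Y₂ : M, G.dd (Y₁ ⊗ Y₂) ≅ G.dd Y₁ ⊗ G.dd Y₂)
    (hu : G.UChar u) {X Y : M} (h : X ⊗ Y ⟶ G.K) :
    G.psiOf f Y X (G.psiOf f X Y h)
      = (f.hom.app X ⊗ₘ f.hom.app Y) ≫ (u X Y).inv ≫ G.ddF.map h ≫ G.mK :=
  G.psi_psi' u hu (f.hom.app X) (f.hom.app Y) h

/-- Involutivity yields `f_{DY} ≫ D²? = id`. -/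
lemma P1_t (f : 𝟭 M ≅ G.ddF) (hP1 : G.Pretty1 (G.psiOf f)) (Y : M) :
    f.hom.app (G.d Y) ≫ G.dmap (f.hom.app Y) = 𝟙 (G.d Y) := by
  have h := hP1 (G.d Y) Y ((G.homEquiv (G.d Y) Y).symm (𝟙 (G.d Y)))
  have e := congrArg (G.homEquiv (G.d Y) Y) h
  rw [homEquiv_psiOf, homEquiv_psiOf, Equiv.apply_symm_apply, dmap_id'] at e
  have e2 : f.hom.app Y ≫ 𝟙 (G.d (G.d Y)) = f.hom.app Y := Category.comp_id _
  rw [e2] at e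
  exact e

/-- The `L`-image of the closed-form triple composite (generalized). -/
lemma E0L {W Z : M} (φZ : Z ⟶ G.dd Z) (φ : W ⟶ G.dd W) (k : Z ⊗ W ⟶ G.K) :
    G.homEquiv Z W ((φZ ▷ W) ≫ (G.dd Z ◁ φ) ≫ G.g (G.dd W) Z (G.g Z W k))
      = φZ ≫ G.dmap (G.dmap (G.homEquiv Z W k)) ≫ G.dmap φ := by
  rw [G.homEquiv_natX, G.homEquiv_natY, homEquiv_g, homEquiv_g]

/-- The `L`-image of the closed-form triple composite. -/
lemma E0_equiv (f : 𝟭 M ≅ G.ddF) {W Z : M} (φ : W ⟶ G.dd W) (k : Z ⊗ W ⟶ G.K) :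
    G.homEquiv Z W ((f.hom.app Z ▷ W) ≫ (G.dd Z ◁ φ) ≫ G.g (G.dd W) Z (G.g Z W k))
      = G.homEquiv Z W k ≫ f.hom.app (G.d W) ≫ G.dmap φ := by
  refine (G.E0L (Z := Z) (f.hom.app Z) φ k).trans ?_
  erw [← Category.assoc, ← ddF_map',
    ← f.hom.naturality (G.homEquiv Z W k), Functor.id_map, Category.assoc]
  rfl

lemma P2iff (f : 𝟭 M ≅ G.ddF) (u : ∀ Y₁ Y₂ : M, G.dd (Y₁ ⊗ Y₂) ≅ G.dd Y₁ ⊗ G.dd Y₂)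
    (hu : G.UChar u) :
    G.Pretty2 (G.psiOf f) ↔ ∀ X Y : M,
      f.hom.app (G.d (X ⊗ Y)) ≫ G.dmap ((f.hom.app X ⊗ₘ f.hom.app Y) ≫ (u X Y).inv)
        = 𝟙 (G.d (X ⊗ Y)) := by
  constructor
  · intro hP X Y
    set k := (G.homEquiv (G.d (X ⊗ Y)) (X ⊗ Y)).symm (𝟙 (G.d (X ⊗ Y))) with hk
    have inst := hP X Y (G.d (X ⊗ Y)) ((α_ (G.d (X ⊗ Y)) X Y).hom ≫ k)
    rw [G.core f u hu k] at inst
    replace inst := (cancel_epi (α_ (G.d (X ⊗ Y)) X Y).hom).mp inst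
    have e := congrArg (G.homEquiv (G.d (X ⊗ Y)) (X ⊗ Y)) inst
    rw [E0_equiv, hk, Equiv.apply_symm_apply, Category.id_comp] at e
    exact e
  · intro hA X Y Z h
    obtain ⟨k, rfl⟩ : ∃ k, h = (α_ Z X Y).hom ≫ k :=
      ⟨(α_ Z X Y).inv ≫ h, by rw [Iso.hom_inv_id_assoc]⟩
    rw [G.core f u hu k]
    refine congrArg (fun m => (α_ Z X Y).hom ≫ m) ?_
    apply (G.homEquiv Z (X ⊗ Y)).injective
    rw [E0_equiv, hA X Y, Category.comp_id]


section Main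

variable (f : 𝟭 M ≅ G.ddF) (u : ∀ Y₁ Y₂ : M, G.dd (Y₁ ⊗ Y₂) ≅ G.dd Y₁ ⊗ G.dd Y₂)

/-- Monoidality rearranged. -/
lemma mono_inv (hmono : ∀ Y₁ Y₂ : M,
      f.hom.app (Y₁ ⊗ Y₂) ≫ (u Y₁ Y₂).hom = (f.hom.app Y₁ ⊗ₘ f.hom.app Y₂)) (X Y : M) :
    (f.hom.app X ⊗ₘ f.hom.app Y) ≫ (u X Y).inv = f.hom.app (X ⊗ Y) := by
  erw [← hmono, Category.assoc, Iso.hom_inv_id, Category.comp_id]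

lemma mono_of (hu : G.UChar u) (hP2 : G.Pretty2 (G.psiOf f)) (hP1 : G.Pretty1 (G.psiOf f)) :
    ∀ Y₁ Y₂ : M,
      f.hom.app (Y₁ ⊗ Y₂) ≫ (u Y₁ Y₂).hom = (f.hom.app Y₁ ⊗ₘ f.hom.app Y₂) := by
  intro X Y
  have A := (G.P2iff f u hu).mp hP2 X Y
  have B := G.P1_t f hP1 (X ⊗ Y)
  have hiso : IsIso (f.hom.app (G.d (X ⊗ Y))) := inferInstance
  have e : G.dmap ((f.hom.app X ⊗ₘ f.hom.app Y) ≫ (u X Y).inv)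
      = G.dmap (f.hom.app (X ⊗ Y)) := by
    erw [← cancel_epi (f.hom.app (G.d (X ⊗ Y))), A]
    exact B.symm
  have e2 := G.dmap_inj e
  erw [← e2, Category.assoc, Iso.inv_hom_id, Category.comp_id]

lemma P1_of (hu : G.UChar u) {cK : G.K ⟶ G.dd G.K} (hcK : G.CKChar cK)
    (hmono : ∀ Y₁ Y₂ : M,
      f.hom.app (Y₁ ⊗ Y₂) ≫ (u Y₁ Y₂).hom = (f.hom.app Y₁ ⊗ₘ f.hom.app Y₂))
    (hK : f.hom.app G.K = cK) : G.Pretty1 (G.psiOf f) := by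
  intro X Y h
  erw [G.psi_psi f u hu h, ← Category.assoc, G.mono_inv f u hmono X Y,
    ← Category.assoc, ← f.hom.naturality h, Functor.id_map, Category.assoc, hK, hcK.1]
  exact Category.comp_id h

lemma fK_of (hu : G.UChar u) {cK : G.K ⟶ G.dd G.K} (hcK : G.CKChar cK)
    (hmono : ∀ Y₁ Y₂ : M,
      f.hom.app (Y₁ ⊗ Y₂) ≫ (u Y₁ Y₂).hom = (f.hom.app Y₁ ⊗ₘ f.hom.app Y₂))
    (hP1 : G.Pretty1 (G.psiOf f)) : f.hom.app G.K = cK := by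
  have e := G.psi_psi f u hu (ρ_ G.K).hom
  rw [hP1 G.K (𝟙_ M) (ρ_ G.K).hom] at e
  erw [← Category.assoc, G.mono_inv f u hmono G.K (𝟙_ M), ← Category.assoc,
    ← f.hom.naturality (ρ_ G.K).hom, Functor.id_map, Category.assoc] at e
  have e2 : f.hom.app G.K ≫ G.mK = 𝟙 G.K := by
    apply (cancel_epi (ρ_ G.K).hom).mp
    rw [Category.comp_id]
    exact e.symm
  have e3 : f.hom.app G.K ≫ (G.mK ≫ cK) = 𝟙 G.K ≫ cK := by
    erw [← Category.assoc, e2]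
  erw [hcK.2] at e3
  have e4 : f.hom.app G.K ≫ 𝟙 (G.dd G.K) = f.hom.app G.K := Category.comp_id _
  rw [e4, Category.id_comp] at e3
  exact e3

end Main

end GVCat

/-- Let `(M, K)` be a Grothendieck–Verdier category, `u` the canonical
monoidal structure on `D²` and `cK : K ≅ D²K` the canonical isomorphism. A natural
isomorphism `f : Id ≅ D²` corresponds to a pivotal structure iff (i) `f` is monoidal and
(ii) `f_K = cK`. In this case `f_{D X} = D(f_X)⁻¹` for all `X`. -/
theorem stmt12 {M : Type u} [Category.{v} M] [MonoidalCategory M] (G : GVCat M)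
    (u : ∀ Y₁ Y₂ : M, G.dd (Y₁ ⊗ Y₂) ≅ G.dd Y₁ ⊗ G.dd Y₂)
    (hu : G.UChar u)
    (cK : G.K ⟶ G.dd G.K)
    (hcK : G.CKChar cK)
    (f : 𝟭 M ≅ G.ddF) :
    ((G.Pretty2 (G.psiOf f) ∧ G.Pretty1 (G.psiOf f)) ↔
      ((∀ Y₁ Y₂ : M,
          f.hom.app (Y₁ ⊗ Y₂) ≫ (u Y₁ Y₂).hom = (f.hom.app Y₁ ⊗ₘ f.hom.app Y₂))
        ∧ f.hom.app G.K = cK))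
    ∧ ((G.Pretty2 (G.psiOf f) ∧ G.Pretty1 (G.psiOf f)) →
        ∀ X : M,
          f.hom.app (G.d X) ≫ G.dmap (f.hom.app X) = 𝟙 (G.d X)
          ∧ G.dmap (f.hom.app X) ≫ f.hom.app (G.d X) = 𝟙 (G.dd (G.d X))) := by
  constructor
  · constructor
    · rintro ⟨hP2, hP1⟩
      have hmono := G.mono_of f u hu hP2 hP1
      exact ⟨hmono, G.fK_of f u hu hcK hmono hP1⟩
    · rintro ⟨hmono, hK⟩
      have hP1 := G.P1_of f u hu hcK hmono hK
      refine ⟨?_, hP1⟩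
      rw [G.P2iff f u hu]
      intro X Y
      rw [G.mono_inv f u hmono X Y]
      exact G.P1_t f hP1 (X ⊗ Y)
  · rintro ⟨hP2, hP1⟩ X
    have t1 := G.P1_t f hP1 X
    refine ⟨t1, ?_⟩
    have hiso : IsIso (f.hom.app (G.d X)) := inferInstance
    have hh : inv (f.hom.app (G.d X)) = G.dmap (f.hom.app X) :=
      IsIso.inv_eq_of_hom_inv_id t1
    erw [← hh, IsIso.inv_hom_id]
    rfl
end

section
/- Let (M, β) be a braided monoidal category. Then the identity functor Id_M, equipped with the isomorphisms β_{Y,X} ∘ β_{X,Y} : X ⊗ Y ≅ X ⊗ Y as structure maps J(X⊗Y) ≅ J(X) ⊗ J(Y), is a braided monoidal functor (the Joyal–Street equivalence J_M). -/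
open CategoryTheory MonoidalCategory

universe v u

/-- The double braiding `β_{Y,X} ∘ β_{X,Y} : X ⊗ Y ⟶ X ⊗ Y`, the monoidal structure map
of the Joyal–Street equivalence `J` (the identity functor). -/
def jsq {M : Type u} [Category.{v} M] [MonoidalCategory M] [BraidedCategory M]
    (X Y : M) : X ⊗ Y ⟶ X ⊗ Y :=
  (β_ X Y).hom ≫ (β_ Y X).hom

/-- Compatibility of the double braiding with the associativity constraint, via
three applications of the Yang–Baxter relation. -/
lemma jsq_assoc {M : Type u} [Category.{v} M] [MonoidalCategory M] [BraidedCategory M]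
    (X Y Z : M) :
    (jsq X Y ▷ Z) ≫ jsq (X ⊗ Y) Z ≫ (α_ X Y Z).hom
      = (α_ X Y Z).hom ≫ (X ◁ jsq Y Z) ≫ jsq X (Y ⊗ Z) := by
  open BraidedCategory in
  simp only [jsq, braiding_tensor_left_hom, braiding_tensor_right_hom, comp_whiskerRight,
    MonoidalCategory.whiskerLeft_comp, Category.assoc, Iso.hom_inv_id_assoc,
    Iso.inv_hom_id_assoc, Iso.inv_hom_id, Category.comp_id]
  calc (β_ X Y).hom ▷ Z ≫ (β_ Y X).hom ▷ Z ≫ (α_ X Y Z).hom ≫ X ◁ (β_ Y Z).hom ≫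
        (α_ X Z Y).inv ≫ (β_ X Z).hom ▷ Y ≫ (β_ Z X).hom ▷ Y ≫ (α_ X Z Y).hom ≫ X ◁ (β_ Z Y).hom
      = (α_ X Y Z).hom ≫ ((α_ X Y Z).inv ≫ (β_ X Y).hom ▷ Z ≫ (α_ Y X Z).hom) ≫
          ((α_ Y X Z).inv ≫ (β_ Y X).hom ▷ Z ≫ (α_ X Y Z).hom ≫ X ◁ (β_ Y Z).hom ≫
            (α_ X Z Y).inv ≫ (β_ X Z).hom ▷ Y ≫ (α_ Z X Y).hom) ≫
          (α_ Z X Y).inv ≫ (β_ Z X).hom ▷ Y ≫ (α_ X Z Y).hom ≫ X ◁ (β_ Z Y).hom := by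
        monoidal
    _ = (α_ X Y Z).hom ≫ ((α_ X Y Z).inv ≫ (β_ X Y).hom ▷ Z ≫ (α_ Y X Z).hom) ≫
          (Y ◁ (β_ X Z).hom ≫ (α_ Y Z X).inv ≫ (β_ Y Z).hom ▷ X ≫ (α_ Z Y X).hom ≫
            Z ◁ (β_ Y X).hom) ≫
          (α_ Z X Y).inv ≫ (β_ Z X).hom ▷ Y ≫ (α_ X Z Y).hom ≫ X ◁ (β_ Z Y).hom := by
        rw [yang_baxter Y X Z]
    _ = (α_ X Y Z).hom ≫ ((α_ X Y Z).inv ≫ (β_ X Y).hom ▷ Z ≫ (α_ Y X Z).hom ≫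
          Y ◁ (β_ X Z).hom ≫ (α_ Y Z X).inv ≫ (β_ Y Z).hom ▷ X ≫ (α_ Z Y X).hom) ≫
          (Z ◁ (β_ Y X).hom ≫ (α_ Z X Y).inv ≫ (β_ Z X).hom ▷ Y ≫ (α_ X Z Y).hom ≫
            X ◁ (β_ Z Y).hom) := by
        monoidal
    _ = (α_ X Y Z).hom ≫ (X ◁ (β_ Y Z).hom ≫ (α_ X Z Y).inv ≫ (β_ X Z).hom ▷ Y ≫
          (α_ Z X Y).hom ≫ Z ◁ (β_ X Y).hom) ≫
          ((α_ Z Y X).inv ≫ (β_ Z Y).hom ▷ X ≫ (α_ Y Z X).hom ≫ Y ◁ (β_ Z X).hom ≫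
            (α_ Y X Z).inv ≫ (β_ Y X).hom ▷ Z ≫ (α_ X Y Z).hom) := by
        rw [yang_baxter X Y Z, ← yang_baxter Z Y X]
    _ = (α_ X Y Z).hom ≫ X ◁ (β_ Y Z).hom ≫ (X ◁ (β_ Z Y).hom ≫ (α_ X Y Z).inv ≫
          (β_ X Y).hom ▷ Z ≫ (α_ Y X Z).hom ≫ Y ◁ (β_ X Z).hom) ≫ Y ◁ (β_ Z X).hom ≫
          (α_ Y X Z).inv ≫ (β_ Y X).hom ▷ Z ≫ (α_ X Y Z).hom := by
        rw [← yang_baxter X Z Y]; monoidal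
    _ = (α_ X Y Z).hom ≫ X ◁ (β_ Y Z).hom ≫ X ◁ (β_ Z Y).hom ≫ (α_ X Y Z).inv ≫
          (β_ X Y).hom ▷ Z ≫ (α_ Y X Z).hom ≫ Y ◁ (β_ X Z).hom ≫ Y ◁ (β_ Z X).hom ≫
          (α_ Y X Z).inv ≫ (β_ Y X).hom ▷ Z ≫ (α_ X Y Z).hom := by
        monoidal

/-- For a braided monoidal category `(M, β)`, the identity functor
equipped with the structure maps `β_{Y,X} ∘ β_{X,Y} : J(X) ⊗ J(Y) ⟶ J(X ⊗ Y)` is a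
braided monoidal functor: the structure maps are natural, compatible with the
associativity and unit constraints, and compatible with the braiding. -/
theorem stmt13 {M : Type u} [Category.{v} M] [MonoidalCategory M] [BraidedCategory M] :
    -- naturality
    (∀ {X X' Y Y' : M} (f : X ⟶ X') (q : Y ⟶ Y'),
      (f ⊗ₘ q) ≫ jsq X' Y' = jsq X Y ≫ (f ⊗ₘ q))
    -- compatibility with the associativity constraints
    ∧ (∀ X Y Z : M,
        (jsq X Y ▷ Z) ≫ jsq (X ⊗ Y) Z ≫ (α_ X Y Z).hom
          = (α_ X Y Z).hom ≫ (X ◁ jsq Y Z) ≫ jsq X (Y ⊗ Z))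
    -- compatibility with the unit constraints
    ∧ (∀ X : M, jsq (𝟙_ M) X ≫ (λ_ X).hom = (λ_ X).hom)
    ∧ (∀ X : M, jsq X (𝟙_ M) ≫ (ρ_ X).hom = (ρ_ X).hom)
    -- compatibility with the braiding
    ∧ (∀ X Y : M, jsq X Y ≫ (β_ X Y).hom = (β_ X Y).hom ≫ jsq Y X) := by
  refine ⟨fun f q => ?_, jsq_assoc, fun X => ?_, fun X => ?_, fun X Y => ?_⟩
  · simp [jsq]
  · simp [jsq, braiding_rightUnitor, braiding_leftUnitor]
  · simp [jsq, braiding_rightUnitor, braiding_leftUnitor]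
  · simp [jsq]
end

section
/- Let (M, K, β) be a braided Grothendieck–Verdier category. The natural isomorphisms θ⁺ : J_M ≅ D² and θ⁻ : J_M⁻¹ ≅ D² are monoidal, where J_M is the Joyal–Street braided autoequivalence, J_M⁻¹ is the identity functor with monoidal structure (β_{Y,X} ∘ β_{X,Y})⁻¹, and D² carries its canonical monoidal structure. -/
open CategoryTheory Opposite MonoidalCategory

universe v u

namespace GVCat

variable {M : Type u} [Category.{v} M] [MonoidalCategory M] (G : GVCat M)

/-- The characterizing property of the canonical unit morphism `η : 𝟙 ⟶ D² 𝟙`. -/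
def EtaChar (η : 𝟙_ M ⟶ G.dd (𝟙_ M)) : Prop :=
  ∀ (X : M) (h : X ⊗ 𝟙_ M ⟶ G.K),
    (η ▷ X) ≫ G.g X (𝟙_ M) h = (λ_ X).hom ≫ (ρ_ X).inv ≫ h

variable [BraidedCategory M]

/-- The characterizing property of `θ⁺ : Id ≅ D²`: precomposition with `θ⁺_Y ⊗ id X`
equals `g⁻¹` followed by pullback along `β⁺_{Y,X} = β_{Y,X}`. -/
def ThetaPlusChar (θ : ∀ Y : M, Y ≅ G.dd Y) : Prop :=
  ∀ (Y X : M) (h : G.dd Y ⊗ X ⟶ G.K),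
    ((θ Y).hom ▷ X) ≫ h = (β_ Y X).hom ≫ (G.g X Y).symm h

/-- The characterizing property of `θ⁻ : Id ≅ D²`: precomposition with `θ⁻_Y ⊗ id X`
equals `g⁻¹` followed by pullback along `β⁻_{Y,X} = β_{X,Y}⁻¹`. -/
def ThetaMinusChar (θ : ∀ Y : M, Y ≅ G.dd Y) : Prop :=
  ∀ (Y X : M) (h : G.dd Y ⊗ X ⟶ G.K),
    ((θ Y).hom ▷ X) ≫ h = (β_ X Y).inv ≫ (G.g X Y).symm h

end GVCat

/-- A twist on a braided category: an automorphism `τ` of the identity functor with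
`τ_{X⊗Y} = β_{Y,X} ∘ β_{X,Y} ∘ (τ_X ⊗ τ_Y)`; equivalently, a monoidal isomorphism
`Id ≅ J` where `J` is the Joyal–Street equivalence. -/
def IsTwist {M : Type u} [Category.{v} M] [MonoidalCategory M] [BraidedCategory M]
    (τ : 𝟭 M ≅ 𝟭 M) : Prop :=
  ∀ X Y : M,
    τ.hom.app (X ⊗ Y) = (τ.hom.app X ⊗ₘ τ.hom.app Y) ≫ (β_ X Y).hom ≫ (β_ Y X).hom


namespace GVCat

variable {M : Type u} [Category.{v} M] [MonoidalCategory M] (G : GVCat M)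

lemma hom_ext {A B : M} {f f' : A ⟶ B}
    (H : ∀ (Y : M) (h : B ⊗ Y ⟶ G.K), (f ▷ Y) ≫ h = (f' ▷ Y) ≫ h) : f = f' := by
  have e := H (G.dinv B) ((G.homEquiv B (G.dinv B)).symm (G.dDinv B).inv)
  have l := G.homEquiv_natX (G.dinv B) f ((G.homEquiv B (G.dinv B)).symm (G.dDinv B).inv)
  have r := G.homEquiv_natX (G.dinv B) f' ((G.homEquiv B (G.dinv B)).symm (G.dDinv B).inv)
  rw [e, r] at l
  rw [Equiv.apply_symm_apply] at l
  have := congrArg (fun t => t ≫ (G.dDinv B).hom) l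
  simpa using this.symm

lemma homEquiv'_natY (X : M) {Y Y' : M} (q : Y' ⟶ Y) (h : X ⊗ Y ⟶ G.K) :
    G.homEquiv' X Y' (X ◁ q ≫ h) = q ≫ G.homEquiv' X Y h := by
  simp only [homEquiv', Equiv.trans_apply, opEquiv_apply]
  rw [G.homEquiv_natY X q h]
  have hm := G.D.symm.toAdjunction.homEquiv_naturality_right_symm
    (Y := op Y) (Y' := op Y') ((G.homEquiv X Y) h) q.op
  erw [hm]
  simp [opEquiv]

lemma g_apply (X Y : M) (h : X ⊗ Y ⟶ G.K) :
    G.g X Y h = (G.homEquiv' (G.dd Y) X).symm (G.homEquiv X Y h ≫ (G.dinvD (G.d Y)).inv) := by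
  simp [g, Iso.homCongr]

lemma g_natX {X X' : M} (Y : M) (f : X' ⟶ X) (h : X ⊗ Y ⟶ G.K) :
    G.g X' Y ((f ▷ Y) ≫ h) = (G.dd Y ◁ f) ≫ G.g X Y h := by
  rw [g_apply, g_apply, G.homEquiv_natX Y f h]
  apply (G.homEquiv' (G.dd Y) X').injective
  rw [Equiv.apply_symm_apply, G.homEquiv'_natY (G.dd Y) f, Equiv.apply_symm_apply,
    Category.assoc]

lemma g_symm_gchain_symm (Y₁ Y₂ X : M) (h : (G.dd Y₁ ⊗ G.dd Y₂) ⊗ X ⟶ G.K) :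
    (G.g X (Y₁ ⊗ Y₂)).symm ((G.gchain Y₁ Y₂ X).symm h)
      = (α_ X Y₁ Y₂).inv ≫ (G.g (X ⊗ Y₁) Y₂).symm
          ((α_ (G.dd Y₂) X Y₁).inv ≫ (G.g (G.dd Y₂ ⊗ X) Y₁).symm
            ((α_ (G.dd Y₁) (G.dd Y₂) X).inv ≫ h)) := by
  simp [gchain, Iso.homCongr]

lemma whiskerRight_u {u : ∀ Y₁ Y₂ : M, G.dd (Y₁ ⊗ Y₂) ≅ G.dd Y₁ ⊗ G.dd Y₂}
    (hu : G.UChar u) (Y₁ Y₂ Z : M) (h : (G.dd Y₁ ⊗ G.dd Y₂) ⊗ Z ⟶ G.K) :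
    ((u Y₁ Y₂).hom ▷ Z) ≫ h = (G.gchain Y₁ Y₂ Z).symm h := by
  have e := hu Y₁ Y₂ Z (((u Y₁ Y₂).hom ▷ Z) ≫ h)
  rw [← Category.assoc, ← comp_whiskerRight, Iso.inv_hom_id, id_whiskerRight,
    Category.id_comp] at e
  have e2 := congrArg (G.gchain Y₁ Y₂ Z).symm e
  rw [Equiv.symm_apply_apply] at e2
  exact e2.symm

end GVCat

section Braid

variable {M : Type u} [Category.{v} M] [MonoidalCategory M]

lemma braid_core (b : ∀ A B : M, A ⊗ B ⟶ B ⊗ A)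
    (nat_right : ∀ (A : M) {B B' : M} (f : B ⟶ B'), (A ◁ f) ≫ b A B' = b A B ≫ (f ▷ A))
    (hexf : ∀ A B C : M, (α_ A B C).hom ≫ b A (B ⊗ C) ≫ (α_ B C A).hom
        = (b A B ▷ C) ≫ (α_ B A C).hom ≫ (B ◁ b A C))
    (hexr : ∀ A B C : M, (α_ A B C).inv ≫ b (A ⊗ B) C ≫ (α_ C A B).inv
        = (A ◁ b B C) ≫ (α_ A C B).inv ≫ (b A C ▷ B))
    (X Y Z : M) :
    ((b X Y ≫ b Y X) ▷ Z) ≫ b (X ⊗ Y) Z ≫ (α_ Z X Y).inv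
      = (α_ X Y Z).hom ≫ b X (Y ⊗ Z) ≫ (α_ Y Z X).hom ≫ b Y (Z ⊗ X) := by
  rw [reassoc_of% (hexf X Y Z)]
  rw [nat_right]
  have e3 := reassoc_of% (hexf Y X Z)
  have e3' := e3 ((α_ X Z Y).inv ≫ (b X Z ▷ Y))
  simp only [Iso.hom_inv_id_assoc] at e3'
  rw [e3']
  rw [← hexr X Y Z]
  simp only [Iso.hom_inv_id_assoc, comp_whiskerRight, Category.assoc]

variable [BraidedCategory M]

lemma braid1 (X Y Z : M) :
    (((β_ X Y).hom ≫ (β_ Y X).hom) ▷ Z) ≫ (β_ (X ⊗ Y) Z).hom ≫ (α_ Z X Y).inv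
      = (α_ X Y Z).hom ≫ (β_ X (Y ⊗ Z)).hom ≫ (α_ Y Z X).hom ≫ (β_ Y (Z ⊗ X)).hom :=
  braid_core (fun A B => (β_ A B).hom)
    (fun A _ _ f => BraidedCategory.braiding_naturality_right A f)
    BraidedCategory.hexagon_forward BraidedCategory.hexagon_reverse X Y Z

lemma braid2 (X Y Z : M) :
    (((β_ Y X).inv ≫ (β_ X Y).inv) ▷ Z) ≫ (β_ Z (X ⊗ Y)).inv ≫ (α_ Z X Y).inv
      = (α_ X Y Z).hom ≫ (β_ (Y ⊗ Z) X).inv ≫ (α_ Y Z X).hom ≫ (β_ (Z ⊗ X) Y).inv :=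
  braid_core (fun A B => (β_ B A).inv)
    (fun A _ _ f => BraidedCategory.braiding_inv_naturality_right A f)
    (fun A B C => BraidedCategory.hexagon_reverse_inv B C A)
    (fun A B C => BraidedCategory.hexagon_forward_inv C A B) X Y Z

end Braid

section Theta

variable {M : Type u} [Category.{v} M] [MonoidalCategory M]

lemma theta_tensor (G : GVCat M)
    {u : ∀ Y₁ Y₂ : M, G.dd (Y₁ ⊗ Y₂) ≅ G.dd Y₁ ⊗ G.dd Y₂} (hu : G.UChar u)
    (θ : ∀ Y : M, Y ≅ G.dd Y) (b : ∀ A B : M, A ⊗ B ⟶ B ⊗ A)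
    (hθ : ∀ (Y X : M) (h : G.dd Y ⊗ X ⟶ G.K),
      ((θ Y).hom ▷ X) ≫ h = b Y X ≫ (G.g X Y).symm h)
    (hb : ∀ X Y Z : M, ((b X Y ≫ b Y X) ▷ Z) ≫ b (X ⊗ Y) Z ≫ (α_ Z X Y).inv
        = (α_ X Y Z).hom ≫ b X (Y ⊗ Z) ≫ (α_ Y Z X).hom ≫ b Y (Z ⊗ X))
    (X Y : M) :
    (b X Y ≫ b Y X) ≫ (θ (X ⊗ Y)).hom ≫ (u X Y).hom = ((θ X).hom ⊗ₘ (θ Y).hom) := by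
  apply G.hom_ext
  intro Z h
  have hh1 : (α_ (G.dd X) (G.dd Y) Z).inv ≫ h = (α_ (G.dd X) (G.dd Y) Z).inv ≫ h := rfl
  set h₁ : G.dd X ⊗ (G.dd Y ⊗ Z) ⟶ G.K := (α_ (G.dd X) (G.dd Y) Z).inv ≫ h with h1d
  set h₂ : (G.dd Y ⊗ Z) ⊗ X ⟶ G.K := (G.g (G.dd Y ⊗ Z) X).symm h₁ with h2d
  set h₃ : G.dd Y ⊗ (Z ⊗ X) ⟶ G.K := (α_ (G.dd Y) Z X).inv ≫ h₂ with h3d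
  set h₄ : (Z ⊗ X) ⊗ Y ⟶ G.K := (G.g (Z ⊗ X) Y).symm h₃ with h4d
  have hL : (((b X Y ≫ b Y X) ≫ (θ (X ⊗ Y)).hom ≫ (u X Y).hom) ▷ Z) ≫ h
      = ((b X Y ≫ b Y X) ▷ Z) ≫ b (X ⊗ Y) Z ≫ (α_ Z X Y).inv ≫ h₄ := by
    simp only [comp_whiskerRight, Category.assoc]
    rw [G.whiskerRight_u hu X Y Z h, hθ (X ⊗ Y) Z, G.g_symm_gchain_symm]
  have m2 : (G.dd X ◁ ((θ Y).hom ▷ Z)) ≫ h₁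
      = G.g (Y ⊗ Z) X ((((θ Y).hom ▷ Z) ▷ X) ≫ h₂) := by
    rw [G.g_natX X ((θ Y).hom ▷ Z) h₂, h2d, Equiv.apply_symm_apply]
  have hR : (((θ X).hom ⊗ₘ (θ Y).hom) ▷ Z) ≫ h
      = (α_ X Y Z).hom ≫ b X (Y ⊗ Z) ≫ (α_ Y Z X).hom ≫ b Y (Z ⊗ X) ≫ h₄ := by
    rw [MonoidalCategory.tensorHom_def, comp_whiskerRight, Category.assoc]
    have s1 : ((G.dd X ◁ (θ Y).hom) ▷ Z) ≫ h
        = (α_ (G.dd X) Y Z).hom ≫ (G.dd X ◁ ((θ Y).hom ▷ Z)) ≫ h₁ := by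
      rw [h1d, ← MonoidalCategory.associator_naturality_middle_assoc]
      simp
    rw [s1, ← Category.assoc, MonoidalCategory.associator_naturality_left, Category.assoc,
      m2, hθ X (Y ⊗ Z), Equiv.symm_apply_apply]
    have s2 : (((θ Y).hom ▷ Z) ▷ X) ≫ h₂
        = (α_ Y Z X).hom ≫ ((θ Y).hom ▷ (Z ⊗ X)) ≫ h₃ := by
      rw [h3d, ← MonoidalCategory.associator_naturality_left_assoc]
      simp
    rw [s2, hθ Y (Z ⊗ X) h₃]
  rw [hL, hR]
  have hb' := reassoc_of% (hb X Y Z)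
  exact hb' h₄

lemma theta_unit (G : GVCat M) {η : 𝟙_ M ⟶ G.dd (𝟙_ M)} (hη : G.EtaChar η)
    (θ : ∀ Y : M, Y ≅ G.dd Y) (b : ∀ A B : M, A ⊗ B ⟶ B ⊗ A)
    (hθ : ∀ (Y X : M) (h : G.dd Y ⊗ X ⟶ G.K),
      ((θ Y).hom ▷ X) ≫ h = b Y X ≫ (G.g X Y).symm h)
    (hb1 : ∀ X : M, b (𝟙_ M) X = (λ_ X).hom ≫ (ρ_ X).inv) :
    (θ (𝟙_ M)).hom = η := by
  apply G.hom_ext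
  intro X k
  have e2 := hη X ((G.g X (𝟙_ M)).symm k)
  rw [Equiv.apply_symm_apply] at e2
  rw [hθ (𝟙_ M) X k, hb1 X, e2]
  simp

end Theta
/-- Let `(M, K, β)` be a braided Grothendieck–Verdier category. The
natural isomorphisms `θ⁺ : J ≅ D²` and `θ⁻ : J⁻¹ ≅ D²` are monoidal, where `J` is the
Joyal–Street equivalence (the identity functor with structure maps `β_{Y,X} ∘ β_{X,Y}`),
`J⁻¹` is the identity functor with structure maps `(β_{Y,X} ∘ β_{X,Y})⁻¹`, and `D²`
carries its canonical monoidal structure `(u, η)`. -/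
theorem stmt15 {M : Type u} [Category.{v} M] [MonoidalCategory M] [BraidedCategory M]
    (G : GVCat M)
    (u : ∀ Y₁ Y₂ : M, G.dd (Y₁ ⊗ Y₂) ≅ G.dd Y₁ ⊗ G.dd Y₂)
    (hu : G.UChar u)
    (η : 𝟙_ M ⟶ G.dd (𝟙_ M))
    (hη : G.EtaChar η)
    (θp θm : ∀ Y : M, Y ≅ G.dd Y)
    (hθp : G.ThetaPlusChar θp) (hθm : G.ThetaMinusChar θm) :
    -- `θ⁺ : J ≅ D²` is compatible with the tensorators
    (∀ X Y : M,
      ((β_ X Y).hom ≫ (β_ Y X).hom) ≫ (θp (X ⊗ Y)).hom ≫ (u X Y).hom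
        = ((θp X).hom ⊗ₘ (θp Y).hom))
    -- `θ⁺` is compatible with the units
    ∧ ((θp (𝟙_ M)).hom = η)
    -- `θ⁻ : J⁻¹ ≅ D²` is compatible with the tensorators
    ∧ (∀ X Y : M,
      ((β_ Y X).inv ≫ (β_ X Y).inv) ≫ (θm (X ⊗ Y)).hom ≫ (u X Y).hom
        = ((θm X).hom ⊗ₘ (θm Y).hom))
    -- `θ⁻` is compatible with the units
    ∧ ((θm (𝟙_ M)).hom = η) := by
  refine ⟨?_, ?_, ?_, ?_⟩
  · intro X Y
    exact theta_tensor G hu θp (fun A B => (β_ A B).hom) hθp braid1 X Y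
  · exact theta_unit G hη θp (fun A B => (β_ A B).hom) hθp
      (fun X => braiding_tensorUnit_left X)
  · intro X Y
    exact theta_tensor G hu θm (fun A B => (β_ B A).inv) hθm braid2 X Y
  · exact theta_unit G hη θm (fun A B => (β_ B A).inv) hθm
      (fun X => braiding_inv_tensorUnit_right X)
end

section
/- Let (M, K, β) be a braided Grothendieck–Verdier category. A twist θ on (M, β) satisfies the ribbon identity θ_X = D⁻¹(θ_{DX}) for all X ∈ M if and only if θ_K = id_K and θ' = θ, where θ' is the unique twist with θθ' equal to the canonical double-twist C_M. Consequently, the correspondence between twists with θ_K = id_K and pivotal structures induces a bijection between ribbon structures on (M, K, β) and those pivotal structures f : Id_M ≅ D² that are fixed by the involution f ↦ f'. -/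
open CategoryTheory Opposite MonoidalCategory

universe v u

/-- `f : Id ≅ D²` is monoidal with respect to the canonical monoidal structure `u`
on `D²`. -/
def IsMonoidalWrt {M : Type u} [Category.{v} M] [MonoidalCategory M] (G : GVCat M)
    (u : ∀ Y₁ Y₂ : M, G.dd (Y₁ ⊗ Y₂) ≅ G.dd Y₁ ⊗ G.dd Y₂)
    (f : 𝟭 M ≅ G.ddF) : Prop :=
  ∀ Y₁ Y₂ : M,
    f.hom.app (Y₁ ⊗ Y₂) ≫ (u Y₁ Y₂).hom = (f.hom.app Y₁ ⊗ₘ f.hom.app Y₂)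

section Aux

variable {M : Type u} [Category.{v} M] [MonoidalCategory M] (G : GVCat M)

lemma aux_uniq {A Y : M} (phi psi : A ⟶ G.dd Y)
    (H : ∀ (X : M) (h : G.dd Y ⊗ X ⟶ G.K), (phi ▷ X) ≫ h = (psi ▷ X) ≫ h) :
    phi = psi := by
  have h0 := congrArg (G.homEquiv A (G.d Y))
    (H (G.d Y) ((G.homEquiv (G.dd Y) (G.d Y)).symm (𝟙 (G.dd Y))))
  rw [G.homEquiv_natX, G.homEquiv_natX, Equiv.apply_symm_apply,
    Category.comp_id, Category.comp_id] at h0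
  exact h0

lemma aux_dinvmap_inj {A B : M} {f g' : A ⟶ B} (h : G.dinvmap f = G.dinvmap g') :
    f = g' :=
  G.D.inverse.map_injective (Quiver.Hom.unop_inj h)

lemma aux_dinvD_nat {X : M} (t : X ⟶ X) :
    G.dinvmap (G.dmap t) ≫ (G.dinvD X).hom = (G.dinvD X).hom ≫ t := by
  have h := congrArg Quiver.Hom.unop (G.D.unitIso.hom.naturality t.op)
  simp only [unop_comp, Functor.id_map, Functor.comp_map, Quiver.Hom.unop_op] at h
  exact h.symm

variable (t ti : ∀ X : M, X ⟶ X)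

lemma aux_tau_d_iff :
    (∀ X : M, t X = (G.dinvD X).inv ≫ G.dinvmap (t (G.d X)) ≫ (G.dinvD X).hom) ↔
    (∀ X : M, t (G.d X) = G.dmap (t X)) := by
  constructor
  · intro hc X
    apply aux_dinvmap_inj G
    have h3 : (G.dinvD X).inv ≫ G.dinvmap (G.dmap (t X)) ≫ (G.dinvD X).hom = t X := by
      rw [aux_dinvD_nat G]; simp
    have h4 := (hc X).symm.trans h3.symm
    rw [cancel_epi (G.dinvD X).inv, cancel_mono (G.dinvD X).hom] at h4
    exact h4
  · intro hd X
    rw [hd X, aux_dinvD_nat G]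
    simp

variable [BraidedCategory M]

lemma aux_star_iff (hnat : ∀ {A B : M} (f : A ⟶ B), f ≫ t B = t A ≫ f) :
    (∀ X : M, t (G.d X) = G.dmap (t X)) ↔
    (∀ (X Y : M) (k : X ⊗ Y ⟶ G.K),
      (t X ▷ Y) ≫ k = (X ◁ t Y) ≫ k) := by
  constructor
  · intro hd X Y k
    apply (G.homEquiv X Y).injective
    rw [G.homEquiv_natX, G.homEquiv_natY]
    have hd' : G.D.functor.map (t Y).op = t (G.d Y) := (hd Y).symm
    rw [hd']
    exact (hnat (G.homEquiv X Y k)).symm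
  · intro hs Y
    have h0 := congrArg (G.homEquiv (G.d Y) Y)
      (hs (G.d Y) Y ((G.homEquiv (G.d Y) Y).symm (𝟙 (G.d Y))))
    rw [G.homEquiv_natX, G.homEquiv_natY, Equiv.apply_symm_apply,
      Category.comp_id, Category.id_comp] at h0
    exact h0

lemma aux_tau_unit (hnat : ∀ {A B : M} (f : A ⟶ B), f ≫ t B = t A ≫ f)
    (htw : ∀ X Y : M, t (X ⊗ Y) = (t X ⊗ₘ t Y) ≫ (β_ X Y).hom ≫ (β_ Y X).hom)
    (hti : ∀ X : M, t X ≫ ti X = 𝟙 X) (hit : ∀ X : M, ti X ≫ t X = 𝟙 X) :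
    t (𝟙_ M) = 𝟙 (𝟙_ M) := by
  have hb : (β_ (𝟙_ M) (𝟙_ M)).hom ≫ (β_ (𝟙_ M) (𝟙_ M)).hom = 𝟙 _ := by
    rw [braiding_tensorUnit_left, MonoidalCategory.unitors_equal]
    simp
  have h : t (𝟙_ M ⊗ 𝟙_ M) = t (𝟙_ M) ⊗ₘ t (𝟙_ M) := by
    rw [htw (𝟙_ M) (𝟙_ M), hb]
    exact Category.comp_id _
  have n := hnat (λ_ (𝟙_ M)).hom
  rw [h, MonoidalCategory.tensorHom_def, Category.assoc, MonoidalCategory.leftUnitor_naturality,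
    MonoidalCategory.unitors_equal, ← Category.assoc,
    MonoidalCategory.rightUnitor_naturality, Category.assoc] at n
  have e3 := (cancel_epi (ρ_ (𝟙_ M)).hom).mp n
  have : IsIso (t (𝟙_ M)) := ⟨ti (𝟙_ M), hti _, hit _⟩
  have e4 : t (𝟙_ M) ≫ t (𝟙_ M) = t (𝟙_ M) ≫ 𝟙 _ := by
    rw [Category.comp_id]; exact e3.symm
  exact (cancel_epi (t (𝟙_ M))).mp e4

lemma aux_lemA (hnat : ∀ {A B : M} (f : A ⟶ B), f ≫ t B = t A ≫ f)
    (htw : ∀ X Y : M, t (X ⊗ Y) = (t X ⊗ₘ t Y) ≫ (β_ X Y).hom ≫ (β_ Y X).hom)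
    (hK : t G.K = 𝟙 G.K) (X Y : M) (k : X ⊗ Y ⟶ G.K) :
    (t X ▷ Y) ≫ (X ◁ t Y) ≫ (β_ X Y).hom ≫ (β_ Y X).hom ≫ k = k := by
  have n : k = t (X ⊗ Y) ≫ k := by
    have n0 := hnat k
    rw [hK, Category.comp_id] at n0
    exact n0
  rw [htw X Y, MonoidalCategory.tensorHom_def] at n
  simpa only [Category.assoc] using n.symm

lemma aux_lemQ (hnat : ∀ {A B : M} (f : A ⟶ B), f ≫ t B = t A ≫ f)
    (htw : ∀ X Y : M, t (X ⊗ Y) = (t X ⊗ₘ t Y) ≫ (β_ X Y).hom ≫ (β_ Y X).hom)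
    (hK : t G.K = 𝟙 G.K) (X Y : M) (m : X ⊗ Y ⟶ G.K) :
    (t X ▷ Y) ≫ (X ◁ t Y) ≫ m = (β_ Y X).inv ≫ (β_ X Y).inv ≫ m := by
  have a := aux_lemA G t hnat htw hK X Y ((β_ Y X).inv ≫ (β_ X Y).inv ≫ m)
  simp only [Iso.hom_inv_id_assoc] at a
  exact a

lemma aux_lemC (θp : ∀ Y : M, Y ≅ G.dd Y) (hθp : G.ThetaPlusChar θp)
    (Y X : M) (h : G.dd Y ⊗ X ⟶ G.K) :
    ((t Y ≫ t Y ≫ (θp Y).hom) ▷ X) ≫ h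
      = (β_ Y X).hom ≫ (X ◁ (t Y ≫ t Y)) ≫ (G.g X Y).symm h := by
  have hp : ∀ (Y X : M) (h : G.dd Y ⊗ X ⟶ G.K),
      ((θp Y).hom ▷ X) ≫ h = (β_ Y X).hom ≫ (G.g X Y).symm h := hθp
  rw [comp_whiskerRight, comp_whiskerRight, Category.assoc, Category.assoc, hp,
    BraidedCategory.braiding_naturality_left_assoc,
    BraidedCategory.braiding_naturality_left_assoc]
  simp only [MonoidalCategory.whiskerLeft_comp, Category.assoc]

lemma aux_thetapK (θp : ∀ Y : M, Y ≅ G.dd Y) (hθp : G.ThetaPlusChar θp)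
    (cK : G.K ⟶ G.dd G.K) (hcK : G.CKChar cK) : (θp G.K).hom = cK := by
  have hp : ∀ (Y X : M) (h : G.dd Y ⊗ X ⟶ G.K),
      ((θp Y).hom ▷ X) ≫ h = (β_ Y X).hom ≫ (G.g X Y).symm h := hθp
  have h1 : (θp G.K).hom ≫ G.mK = 𝟙 G.K := by
    rw [GVCat.mK, ← Category.assoc, MonoidalCategory.rightUnitor_inv_naturality,
      Category.assoc, hp, Equiv.symm_apply_apply, braiding_tensorUnit_right]
    simp
  have hcK2 : G.mK ≫ cK = 𝟙 (G.dd G.K) := hcK.2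
  calc (θp G.K).hom = (θp G.K).hom ≫ (G.mK ≫ cK) := by rw [hcK2, Category.comp_id]
    _ = cK := by rw [← Category.assoc, h1, Category.id_comp]

lemma aux_core (hnat : ∀ {A B : M} (f : A ⟶ B), f ≫ t B = t A ≫ f)
    (htw : ∀ X Y : M, t (X ⊗ Y) = (t X ⊗ₘ t Y) ≫ (β_ X Y).hom ≫ (β_ Y X).hom)
    (hti : ∀ X : M, t X ≫ ti X = 𝟙 X) (hit : ∀ X : M, ti X ≫ t X = 𝟙 X)
    (θp θm : ∀ Y : M, Y ≅ G.dd Y)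
    (hθp : G.ThetaPlusChar θp) (hθm : G.ThetaMinusChar θm) :
    (∀ X : M, t (G.d X) = G.dmap (t X)) ↔
    (t G.K = 𝟙 G.K ∧
      ∀ X : M, t X ≫ t X = (θm X).hom ≫ (θp X).inv) := by
  have hm : ∀ (Y X : M) (h : G.dd Y ⊗ X ⟶ G.K),
      ((θm Y).hom ▷ X) ≫ h = (β_ X Y).inv ≫ (G.g X Y).symm h := hθm
  constructor
  · intro hd
    have hs := (aux_star_iff G t hnat).mp hd
    have hu1 := aux_tau_unit t ti hnat htw hti hit
    have hK : t G.K = 𝟙 G.K := by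
      have h := hs (𝟙_ M) G.K (λ_ G.K).hom
      rw [hu1, MonoidalCategory.id_whiskerRight, Category.id_comp,
        MonoidalCategory.leftUnitor_naturality] at h
      have h2 : (λ_ G.K).hom ≫ 𝟙 G.K = (λ_ G.K).hom ≫ t G.K := by
        rw [Category.comp_id]; exact h
      exact ((cancel_epi (λ_ G.K).hom).mp h2).symm
    refine ⟨hK, fun Y => ?_⟩
    rw [Iso.eq_comp_inv, Category.assoc]
    apply aux_uniq G
    intro X h
    rw [aux_lemC G t θp hθp, hm]
    have E1 : (X ◁ (t Y ≫ t Y)) ≫ (G.g X Y).symm h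
        = (β_ Y X).inv ≫ (β_ X Y).inv ≫ (G.g X Y).symm h := by
      rw [MonoidalCategory.whiskerLeft_comp, Category.assoc,
        ← hs X Y ((X ◁ t Y) ≫ (G.g X Y).symm h)]
      exact aux_lemQ G t hnat htw hK X Y ((G.g X Y).symm h)
    rw [E1, Iso.hom_inv_id_assoc]
  · rintro ⟨hK, H2⟩
    have P : ∀ (X Y : M) (m : X ⊗ Y ⟶ G.K),
        (X ◁ (t Y ≫ t Y)) ≫ m = (β_ Y X).inv ≫ (β_ X Y).inv ≫ m := by
      intro X Y m
      have h2 : t Y ≫ t Y ≫ (θp Y).hom = (θm Y).hom := by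
        rw [← Category.assoc, H2 Y, Category.assoc, Iso.inv_hom_id, Category.comp_id]
      have c := aux_lemC G t θp hθp Y X (G.g X Y m)
      rw [Equiv.symm_apply_apply, h2, hm, Equiv.symm_apply_apply] at c
      rw [c, Iso.inv_hom_id_assoc]
    have star : ∀ (X Y : M) (n : X ⊗ Y ⟶ G.K),
        (t X ▷ Y) ≫ n = (X ◁ t Y) ≫ n := by
      intro X Y n
      have hcan : (X ◁ t Y) ≫ (X ◁ ti Y) = 𝟙 (X ⊗ Y) := by
        rw [← MonoidalCategory.whiskerLeft_comp, hti Y,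
          MonoidalCategory.whiskerLeft_id]
      calc (t X ▷ Y) ≫ n
          = (t X ▷ Y) ≫ ((X ◁ t Y) ≫ (X ◁ ti Y)) ≫ n := by
            rw [hcan, Category.id_comp]
        _ = (t X ▷ Y) ≫ (X ◁ t Y) ≫ (X ◁ ti Y) ≫ n := by
            rw [Category.assoc]
        _ = (β_ Y X).inv ≫ (β_ X Y).inv ≫ (X ◁ ti Y) ≫ n :=
            aux_lemQ G t hnat htw hK X Y _
        _ = (X ◁ (t Y ≫ t Y)) ≫ (X ◁ ti Y) ≫ n :=
            (P X Y _).symm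
        _ = (X ◁ t Y) ≫ ((X ◁ t Y) ≫ (X ◁ ti Y)) ≫ n := by
            rw [MonoidalCategory.whiskerLeft_comp]
            simp only [Category.assoc]
        _ = (X ◁ t Y) ≫ n := by rw [hcan, Category.id_comp]
    exact (aux_star_iff G t hnat).mpr star

end Aux

/-- Let `(M, K, β)` be a braided Grothendieck–Verdier category, with the
canonical double-twist `C_X = (θ⁺_X)⁻¹ ∘ θ⁻_X` and canonical isomorphism
`γ_X = θ⁺_{D²X} ∘ θ⁻_X : X ≅ D⁴X`.
(1) A twist `τ` satisfies the ribbon identity `τ_X = D⁻¹(τ_{D X})` iff `τ_K = id` and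
`τ' = τ`, i.e. `ττ = C`.
(2) Consequently, under the correspondence `f = θ⁺ ∘ τ` between twists with `τ_K = id`
and pivotal structures, ribbon structures correspond exactly to the pivotal structures
fixed by the involution `f ↦ f'`, i.e. those with `ff = γ`. -/
theorem stmt19 {M : Type u} [Category.{v} M] [MonoidalCategory M] [BraidedCategory M]
    (G : GVCat M)
    (u : ∀ Y₁ Y₂ : M, G.dd (Y₁ ⊗ Y₂) ≅ G.dd Y₁ ⊗ G.dd Y₂)
    (hu : G.UChar u)
    (cK : G.K ⟶ G.dd G.K)
    (hcK : G.CKChar cK)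
    (θp θm : ∀ Y : M, Y ≅ G.dd Y)
    (hθp : G.ThetaPlusChar θp) (hθm : G.ThetaMinusChar θm) :
    -- (1)
    (∀ τ : 𝟭 M ≅ 𝟭 M, IsTwist τ →
      ((∀ X : M, τ.hom.app X
          = (G.dinvD X).inv ≫ G.dinvmap (τ.hom.app (G.d X)) ≫ (G.dinvD X).hom) ↔
        (τ.hom.app G.K = 𝟙 G.K ∧
          ∀ X : M, τ.hom.app X ≫ τ.hom.app X = (θm X).hom ≫ (θp X).inv)))
    -- (2)
    ∧ (∀ (τ : 𝟭 M ≅ 𝟭 M) (f : 𝟭 M ≅ G.ddF), IsTwist τ →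
        (∀ X : M, f.hom.app X = τ.hom.app X ≫ (θp X).hom) →
        (IsMonoidalWrt G u f ∧ f.hom.app G.K = cK) →
        ((∀ X : M, τ.hom.app X
            = (G.dinvD X).inv ≫ G.dinvmap (τ.hom.app (G.d X)) ≫ (G.dinvD X).hom) ↔
          (∀ X : M, f.hom.app X ≫ f.hom.app (G.dd X)
            = (θm X).hom ≫ (θp (G.dd X)).hom))) := by
  have main : ∀ τ : 𝟭 M ≅ 𝟭 M, IsTwist τ →
      ((∀ X : M, τ.hom.app X
          = (G.dinvD X).inv ≫ G.dinvmap (τ.hom.app (G.d X)) ≫ (G.dinvD X).hom) ↔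
        (τ.hom.app G.K = 𝟙 G.K ∧
          ∀ X : M, τ.hom.app X ≫ τ.hom.app X = (θm X).hom ≫ (θp X).inv)) := by
    intro τ ht
    exact (aux_tau_d_iff G (fun X => τ.hom.app X)).trans
      (aux_core G (fun X => τ.hom.app X) (fun X => τ.inv.app X)
        (fun {A B} f => τ.hom.naturality f)
        (fun X Y => ht X Y)
        (fun X => τ.hom_inv_id_app X) (fun X => τ.inv_hom_id_app X)
        θp θm hθp hθm)
  refine ⟨main, ?_⟩
  intro τ f ht hft hmf
  have nθ : ∀ X : M, (θp X).hom ≫ τ.hom.app (G.dd X) = τ.hom.app X ≫ (θp X).hom :=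
    fun X => τ.hom.naturality (θp X).hom
  have key : ∀ X : M, f.hom.app X ≫ f.hom.app (G.dd X)
      = τ.hom.app X ≫ τ.hom.app X ≫ (θp X).hom ≫ (θp (G.dd X)).hom := by
    intro X
    calc (f.hom.app X ≫ f.hom.app (G.dd X) : X ⟶ G.dd (G.dd X))
        = (τ.hom.app X ≫ (θp X).hom) ≫ (τ.hom.app (G.dd X) ≫ (θp (G.dd X)).hom) := by
          rw [hft X, hft (G.dd X)]; rfl
      _ = τ.hom.app X ≫ ((θp X).hom ≫ τ.hom.app (G.dd X)) ≫ (θp (G.dd X)).hom := by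
          simp only [Category.assoc]
      _ = τ.hom.app X ≫ (τ.hom.app X ≫ (θp X).hom) ≫ (θp (G.dd X)).hom := by
          rw [nθ X]
      _ = τ.hom.app X ≫ τ.hom.app X ≫ (θp X).hom ≫ (θp (G.dd X)).hom := by
          simp only [Category.assoc]
  have hτK : τ.hom.app G.K = 𝟙 G.K := by
    have hcc := hft G.K
    rw [hmf.2, ← aux_thetapK G θp hθp cK hcK] at hcc
    have e : 𝟙 G.K ≫ (θp G.K).hom = τ.hom.app G.K ≫ (θp G.K).hom := by
      rw [Category.id_comp]; exact hcc
    exact ((cancel_mono (θp G.K).hom).mp e).symm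
  constructor
  · intro hrib X
    have hc := (main τ ht).mp hrib
    have h22 : τ.hom.app X ≫ τ.hom.app X = (θm X).hom ≫ (θp X).inv := hc.2 X
    calc (f.hom.app X ≫ f.hom.app (G.dd X) : X ⟶ G.dd (G.dd X))
        = τ.hom.app X ≫ τ.hom.app X ≫ (θp X).hom ≫ (θp (G.dd X)).hom := key X
      _ = (τ.hom.app X ≫ τ.hom.app X) ≫ (θp X).hom ≫ (θp (G.dd X)).hom :=
          (Category.assoc _ _ _).symm
      _ = ((θm X).hom ≫ (θp X).inv) ≫ (θp X).hom ≫ (θp (G.dd X)).hom := by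
          rw [h22]
      _ = (θm X).hom ≫ (θp (G.dd X)).hom := by simp
  · intro hff
    apply (main τ ht).mpr
    refine ⟨hτK, fun X => ?_⟩
    have e' : τ.hom.app X ≫ τ.hom.app X ≫ (θp X).hom ≫ (θp (G.dd X)).hom
        = (θm X).hom ≫ (θp (G.dd X)).hom := (key X).symm.trans (hff X)
    have e2 : (τ.hom.app X ≫ τ.hom.app X ≫ (θp X).hom) ≫ (θp (G.dd X)).hom
        = (θm X).hom ≫ (θp (G.dd X)).hom := by
      simpa only [Category.assoc] using e'
    have e3 := (cancel_mono (θp (G.dd X)).hom).mp e2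
    rw [Iso.eq_comp_inv, Category.assoc]
    exact e3
end
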